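/- Let G ≤ Aut(X*) be an elementary amenable self-replicating group, and let γ and β be words in free groups of finite rank such that the quotient G/β(γ(G)) is a max-n group. Then there exist weakly self-replicating normal subgroups M and N of G such that: (1) N ≤ M, γ(G) ≤ M, and β(γ(G)) ≤ N; (2) rk(M) = rk(γ(G)) and rk(N) = rk(β(γ(G))); and (3) β(M/N) = 1, i.e. every value of the word β at a tuple of elements of M lies in N. -/

import Mathlib

universe u v

/-- The automorphism group of the rooted tree `X*`: permutations of the free monoid
`List X` that preserve the prefix relation. -/
def treeAut (X : Type u) : Subgroup (Equiv.Perm (List X)) where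
  carrier := {g | ∀ a b : List X, a <+: b ↔ g a <+: g b}
  one_mem' := by intro a b; simp
  mul_mem' := by
    intro g h hg hh a b
    simpa [Equiv.Perm.mul_apply] using (hh a b).trans (hg (h a) (h b))
  inv_mem' := by
    intro g hg a b
    simpa using (hg (g⁻¹ a) (g⁻¹ b)).symm

/-- The section of `g` at the word `w`: the unique automorphism `s` satisfying
`g (w ++ v) = g w ++ s v` for all `v` (with junk value `1` if no such permutation exists). -/
noncomputable def secAt {X : Type u} (g : Equiv.Perm (List X)) (w : List X) :
    Equiv.Perm (List X) :=
  haveI := Classical.propDecidable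
  if h : ∃ s : Equiv.Perm (List X), ∀ v : List X, g (w ++ v) = g w ++ s v then h.choose
  else 1

/-- The permutation of `X` induced by `g` on the first level of the tree. -/
noncomputable def perm1 {X : Type u} (g : Equiv.Perm (List X)) : Equiv.Perm X :=
  haveI := Classical.propDecidable
  if h : ∃ σ : Equiv.Perm X, ∀ x : X, g [x] = [σ x] then h.choose else 1

/-- A permutation of `X`, viewed as a finitary automorphism of `X*` of depth (at most) one. -/
def embed1 {X : Type u} (σ : Equiv.Perm X) : Equiv.Perm (List X) where
  toFun w := match w with
    | [] => []
    | x :: vtl => σ x :: vtl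
  invFun w := match w with
    | [] => []
    | x :: vtl => σ⁻¹ x :: vtl
  left_inv := by rintro (_ | ⟨x, vtl⟩) <;> simp
  right_inv := by rintro (_ | ⟨x, vtl⟩) <;> simp

/-- `G` is self-similar: all sections of elements of `G` belong to `G`. -/
def SelfSimilarSub {X : Type u} (G : Subgroup (Equiv.Perm (List X))) : Prop :=
  ∀ g ∈ G, ∀ w : List X, secAt g w ∈ G

/-- `sec_G(v)`: the image of the pointwise stabilizer of `v` in `G` under the
section homomorphism at `v`. -/
def secImage {X : Type u} (G : Subgroup (Equiv.Perm (List X))) (v : List X) :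
    Set (Equiv.Perm (List X)) :=
  {h | ∃ g ∈ G, g v = v ∧ secAt g v = h}

/-- `G` is self-replicating: self-similar, transitive on `X`, and `sec_G(x) = G`
for every `x ∈ X`. -/
def SelfReplicating {X : Type u} (G : Subgroup (Equiv.Perm (List X))) : Prop :=
  SelfSimilarSub G ∧ (∀ x y : X, ∃ g ∈ G, g [x] = [y]) ∧
    ∀ x : X, secImage G [x] = (G : Set (Equiv.Perm (List X)))

/-- `G` is weakly self-replicating: `sec_G(v) = G` for every word `v`. -/
def WeaklySelfReplicating {X : Type u} (G : Subgroup (Equiv.Perm (List X))) : Prop :=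
  ∀ v : List X, secImage G v = (G : Set (Equiv.Perm (List X)))

/-- `g` is finitary: all sections at some level are trivial. -/
def IsFinitary {X : Type u} (g : Equiv.Perm (List X)) : Prop :=
  ∃ k : ℕ, ∀ v : List X, v.length = k → secAt g v = 1

/-- `g` is directed. -/
def IsDirectedAut {X : Type u} (g : Equiv.Perm (List X)) : Prop :=
  ∃ k : ℕ, 1 ≤ k ∧ ∃ w : List X, w.length = k ∧ secAt g w = g ∧
    ∀ v : List X, v.length = k → v ≠ w → IsFinitary (secAt g v)

/-- `g` has bounded activity. -/
def IsBoundedAut {X : Type u} (g : Equiv.Perm (List X)) : Prop :=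
  ∃ N : ℕ, ∀ n : ℕ, 1 ≤ n →
    Set.ncard {v : List X | v.length = n ∧ secAt g v ≠ 1} ≤ N

/-- `g` is finite state. -/
def IsFiniteState {X : Type u} (g : Equiv.Perm (List X)) : Prop :=
  (Set.range fun v : List X => secAt g v).Finite

/-- A bounded automata group: a finitely generated self-similar group of tree
automorphisms, all of whose elements are bounded and finite state. -/
def BoundedAutomataGroup {X : Type u} (G : Subgroup (Equiv.Perm (List X))) : Prop :=
  G ≤ treeAut X ∧ G.FG ∧ SelfSimilarSub G ∧
    ∀ g ∈ G, IsBoundedAut g ∧ IsFiniteState g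

/-- An odometer: `⟨d⟩` is transitive on `X` and `d` has exactly one nontrivial
first-level section, which equals `d`. -/
def IsOdometer {X : Type u} (d : Equiv.Perm (List X)) : Prop :=
  (∀ x y : X, ∃ n : ℤ, (d ^ n) [x] = [y]) ∧
  (∀ x : X, secAt d [x] = 1 ∨ secAt d [x] = d) ∧
  ∃! x : X, secAt d [x] = d

/-- A generalized basilica group, with distinguished generating set `Y`. -/
def GenBasilica {X : Type u} (G : Subgroup (Equiv.Perm (List X)))
    (Y : Set (Equiv.Perm (List X))) : Prop :=
  G ≤ treeAut X ∧ Y.Finite ∧ Subgroup.closure Y = G ∧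
    ∀ g ∈ Y, (∀ x : X, secAt g [x] = 1) ∨
      ((∀ x : X, secAt g [x] = 1 ∨ secAt g [x] = g) ∧ ∃! x : X, secAt g [x] = g)

/-- The generating set `Y` is balanced: for each directed `g ∈ Y` with active vertex `x`,
the least `n ≥ 1` such that `g ^ n` fixes `x` also satisfies that `g ^ n` fixes `X`
pointwise. -/
def BalancedSet {X : Type u} (Y : Set (Equiv.Perm (List X))) : Prop :=
  ∀ g ∈ Y, IsDirectedAut g → ∀ x : X, secAt g [x] = g →
    ∀ n : ℕ, 1 ≤ n → (g ^ n) [x] = [x] →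
      (∀ m : ℕ, 1 ≤ m → m < n → (g ^ m) [x] ≠ [x]) →
      ∀ y : X, (g ^ n) [y] = [y]

/-- A bounded automata group in reduced form, with distinguished generating set `Y`. -/
def ReducedForm {X : Type u} (G : Subgroup (Equiv.Perm (List X)))
    (Y : Set (Equiv.Perm (List X))) : Prop :=
  Y.Finite ∧ Subgroup.closure Y = G ∧
    ∀ g ∈ Y, (∀ x : X, secAt g [x] = 1) ∨
      ((∀ x : X, secAt g [x] = g ∨ ∃ h ∈ G, secAt g [x] = embed1 (perm1 h)) ∧
        ∃! x : X, secAt g [x] = g)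

/-- A group of abelian wreath type, with distinguished (self-similar) generating set `Y`. -/
def AbelianWreathType {X : Type u} (G : Subgroup (Equiv.Perm (List X)))
    (Y : Set (Equiv.Perm (List X))) : Prop :=
  G ≤ treeAut X ∧
  (∀ g ∈ G, ∀ h ∈ G, perm1 g * perm1 h = perm1 h * perm1 g) ∧
  Y.Finite ∧ Subgroup.closure Y = G ∧
  (∀ g ∈ Y, ∀ x : X, secAt g [x] ∈ Y) ∧
  ∀ g ∈ Y, (∀ x : X, secAt g [x] = 1) ∨
    ((∀ x : X, secAt g [x] = g ∨ ∃ h ∈ G, secAt g [x] = embed1 (perm1 h)) ∧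
      ∃! x : X, secAt g [x] = g)

/-- The setoid on `X` whose classes are the orbits of `⟨σ⟩`, i.e. the cycles (including
length-one cycles) in the complete cycle decomposition of `σ`. -/
def cycleSetoid {X : Type u} (σ : Equiv.Perm X) : Setoid X where
  r x y := ∃ n : ℤ, (σ ^ n) x = y
  iseqv := by
    constructor
    · exact fun x => ⟨0, by simp⟩
    · rintro x y ⟨n, rfl⟩
      exact ⟨-n, by rw [← Equiv.Perm.mul_apply, ← zpow_add, neg_add_cancel, zpow_zero,
        Equiv.Perm.one_apply]⟩
    · rintro x y z ⟨n, rfl⟩ ⟨m, rfl⟩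
      exact ⟨m + n, by rw [← Equiv.Perm.mul_apply, ← zpow_add]⟩

/-- The vertex set of the cycle graph of a sequence of permutations: elements of `X`
together with the cycles of the permutations. -/
def CycleVertex {X : Type u} {ι : Type v} (σ : ι → Equiv.Perm X) : Type (max u v) :=
  X ⊕ Σ i : ι, Quotient (cycleSetoid (σ i))

/-- The cycle graph of a sequence of permutations of `X`: a bipartite graph on
`X ⊔ {cycles}`, with an edge between `x ∈ X` and a cycle whenever `x` appears in it. -/
def cycleGraph {X : Type u} {ι : Type v} (σ : ι → Equiv.Perm X) :
    SimpleGraph (CycleVertex σ) where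
  Adj a b := ∃ (x : X) (p : Σ i : ι, Quotient (cycleSetoid (σ i))),
      Quotient.mk (cycleSetoid (σ p.1)) x = p.2 ∧
      ((a = Sum.inl x ∧ b = Sum.inr p) ∨ (a = Sum.inr p ∧ b = Sum.inl x))
  symm := by
    constructor
    rintro a b ⟨x, p, hx, h | h⟩ <;> exact ⟨x, p, hx, by tauto⟩
  loopless := by
    constructor
    rintro a ⟨x, p, hx, ⟨h1, h2⟩ | ⟨h1, h2⟩⟩ <;> simp_all

/-- A sequence of permutations of `X` is tree-like if its cycle graph is a tree. -/
def TreeLike {X : Type u} {ι : Type v} (σ : ι → Equiv.Perm X) : Prop :=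
  (cycleGraph σ).IsTree

/-- A kneading automata group, with distinguished generating set `Y`. -/
def Kneading {X : Type u} (G : Subgroup (Equiv.Perm (List X)))
    (Y : Set (Equiv.Perm (List X))) : Prop :=
  G ≤ treeAut X ∧ Y.Finite ∧ Subgroup.closure Y = G ∧
  (∀ g ∈ Y, ∀ x : X, secAt g [x] ∈ Y) ∧
  (∀ h ∈ Y, h ≠ 1 → ∃! p : Equiv.Perm (List X) × X, p.1 ∈ Y ∧ secAt p.1 [p.2] = h) ∧
  (∀ h ∈ Y, ∀ x y : X, (∃ n : ℤ, ((perm1 h) ^ n) x = y) →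
      secAt h [x] ≠ 1 → secAt h [y] ≠ 1 → x = y) ∧
  TreeLike (fun h : {h : Equiv.Perm (List X) // h ∈ Y ∧ h ≠ 1} => perm1 h.1)

/-- A group is virtually abelian if it has an abelian subgroup of finite index. -/
def VirtuallyAbelian (G : Type u) [Group G] : Prop :=
  ∃ H : Subgroup G, H.FiniteIndex ∧ ∀ a b : ↥H, a * b = b * a

/-- A group is locally finite if all of its finitely generated subgroups are finite. -/
def LocallyFiniteGroup (G : Type u) [Group G] : Prop :=
  ∀ H : Subgroup G, H.FG → Finite ↥H

/-- The class of elementary amenable groups: the smallest class of groups containing all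
finite groups and all abelian groups and closed under subgroups (equivalently, injective
homomorphisms), quotients (equivalently, surjective homomorphisms), group extensions and
directed unions. -/
inductive ElementaryAmenable : ∀ (G : Type u) [inst : Group G], Prop where
  | of_finite (G : Type u) [Group G] (h : Finite G) : ElementaryAmenable G
  | of_comm (G : Type u) [Group G] (h : ∀ a b : G, a * b = b * a) : ElementaryAmenable G
  | of_injective (G H : Type u) [Group G] [Group H] (f : G →* H)
      (hf : Function.Injective f) (hH : ElementaryAmenable H) : ElementaryAmenable G
  | of_surjective (G H : Type u) [Group G] [Group H] (f : G →* H)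
      (hf : Function.Surjective f) (hG : ElementaryAmenable G) : ElementaryAmenable H
  | of_extension (G : Type u) [Group G] (N : Subgroup G) [N.Normal]
      (hN : ElementaryAmenable ↥N) (hQ : ElementaryAmenable (G ⧸ N)) :
      ElementaryAmenable G
  | of_directedUnion (G : Type u) [Group G] (ι : Type u) (H : ι → Subgroup G)
      (hdir : Directed (· ≤ ·) H) (hsup : (⨆ i, H i) = ⊤)
      (h : ∀ i, ElementaryAmenable ↥(H i)) : ElementaryAmenable G

/-- The ordinal-indexed hierarchy of elementary amenable groups: `EG₀` consists of the
groups that are finite or abelian (closed under isomorphism); `EG_{α+1}` consists of the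
`EG_α`-by-`EG₀` groups together with the directed unions of `EG_α` groups; and
`EG_λ = ⋃_{β<λ} EG_β` for `λ` a limit. -/
inductive InEG : Ordinal.{u} → ∀ (G : Type u) [inst : Group G], Prop where
  | base (G : Type u) [Group G] (h : Finite G ∨ ∀ a b : G, a * b = b * a) : InEG 0 G
  | iso (α : Ordinal.{u}) (G H : Type u) [Group G] [Group H] (e : G ≃* H)
      (h : InEG α G) : InEG α H
  | succ_ext (α : Ordinal.{u}) (G : Type u) [Group G] (N : Subgroup G) [N.Normal]
      (hN : InEG α ↥N)
      (hQ : Finite (G ⧸ N) ∨ ∀ a b : G ⧸ N, a * b = b * a) : InEG (α + 1) G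
  | succ_lim (α : Ordinal.{u}) (G : Type u) [Group G] (ι : Type u) (H : ι → Subgroup G)
      (hdir : Directed (· ≤ ·) H) (hsup : (⨆ i, H i) = ⊤)
      (h : ∀ i, InEG α ↥(H i)) : InEG (α + 1) G
  | limit (α β : Ordinal.{u}) (G : Type u) [Group G] (hα : Order.IsSuccLimit α) (hβ : β < α)
      (h : InEG β G) : InEG α G

/-- The construction rank of an elementary amenable group: the least ordinal `α` with
`G ∈ EG_α`. -/
noncomputable def egRank (G : Type u) [Group G] : Ordinal.{u} :=
  sInf {α : Ordinal.{u} | InEG α G}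

/-- `M` is a normal subgroup of `H` (both viewed inside a common ambient group). -/
def NormalIn {G : Type u} [Group G] (M H : Subgroup G) : Prop :=
  M ≤ H ∧ ∀ h ∈ H, ∀ m ∈ M, h * m * h⁻¹ ∈ M

/-- The verbal subgroup of the subgroup `H` given by the word `γ`, viewed inside the
ambient group. -/
def verbalIn {G : Type u} [Group G] {n : ℕ} (γ : FreeGroup (Fin n)) (H : Subgroup G) :
    Subgroup G :=
  Subgroup.closure {g | ∃ f : Fin n → G, (∀ i, f i ∈ H) ∧ FreeGroup.lift f γ = g}

/-!
Put `K = γ(G)`, `L = β(K)` and fix a letter `x`. Since `G = sec_G(x)`, every value of a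
word on `G` is the section at `x` of the same word evaluated at lifts stabilising `x`; hence
`K ≤ sec_K(x)` and likewise `L ≤ sec_L(x)`. Iterating `H ↦ sec_H(x)` therefore gives two
ascending chains `K = K₀ ≤ K₁ ≤ ⋯` and `L = L₀ ≤ L₁ ≤ ⋯` of normal subgroups of `G`
containing `β(γ(G))`, so both become stationary, say at `M = Kₙ` and `N = Lₙ`.

A normal subgroup `M` of `G` with `sec_M(x) = M` is weakly self-replicating: conjugating by
elements of the transitive group `G` moves `x` to any other letter, and induction on the
length of the word does the rest. Each `Kᵢ₊₁` is a quotient of a subgroup of `Kᵢ`, and the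
classes `EG_α` are closed under both, so `rk(M) ≤ rk(K) ≤ rk(M)`; similarly for `N`.
Finally, `β(Kᵢ) ≤ Lᵢ` by the same lifting argument, so `β(M) ≤ N`.
-/

theorem Equiv.Perm.apply_inv_self {α : Type*} (f : Equiv.Perm α) (x : α) : f (f⁻¹ x) = x :=
  f.apply_symm_apply x

theorem Equiv.Perm.inv_apply_self {α : Type*} (f : Equiv.Perm α) (x : α) : f⁻¹ (f x) = x :=
  f.symm_apply_apply x

theorem List.nodup_inits {α : Type*} : ∀ l : List α, l.inits.Nodup
  | [] => by simp
  | x :: l => by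
      rw [List.inits]
      exact List.nodup_cons.mpr ⟨by simp, (nodup_inits l).map fun a b h => by simpa using h⟩

section TreeAut

variable {X : Type u} {g h : Equiv.Perm (List X)}

lemma treeAut_apply_nil (hg : g ∈ treeAut X) : g [] = [] :=
  List.prefix_nil.mp (by simpa using (hg [] (g⁻¹ [])).mp List.nil_prefix)

lemma length_apply_of_mem_treeAut (hg : g ∈ treeAut X) (a : List X) :
    (g a).length = a.length := by
  classical
  have himage : a.inits.toFinset.image g = (g a).inits.toFinset := by
    ext c
    simp only [Finset.mem_image, List.mem_toFinset, List.mem_inits]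
    refine ⟨fun ⟨b, hb, hbc⟩ => hbc ▸ (hg b a).mp hb, fun hc => ⟨g⁻¹ c, ?_, by simp⟩⟩
    simpa using (hg (g⁻¹ c) a).mpr (by simpa using hc)
  have hcard := Finset.card_image_of_injective a.inits.toFinset g.injective
  rw [himage, List.toFinset_card_of_nodup (List.nodup_inits _),
    List.toFinset_card_of_nodup (List.nodup_inits _), List.length_inits,
    List.length_inits] at hcard
  omega

lemma exists_section (hg : g ∈ treeAut X) (w : List X) :
    ∃ s : Equiv.Perm (List X), ∀ v, g (w ++ v) = g w ++ s v := by
  have hdrop : ∀ v, g (w ++ v) = g w ++ (g (w ++ v)).drop (g w).length := fun v => by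
    obtain ⟨t, ht⟩ := (hg w (w ++ v)).mp (List.prefix_append w v)
    rw [← ht, List.drop_left]
  have hdrop' : ∀ u, g⁻¹ (g w ++ u) = w ++ (g⁻¹ (g w ++ u)).drop w.length := fun u => by
    have hpre := (inv_mem hg (g w) (g w ++ u)).mp (List.prefix_append _ _)
    rw [Equiv.Perm.inv_apply_self] at hpre
    obtain ⟨t, ht⟩ := hpre
    rw [← ht, List.drop_left]
  refine ⟨⟨fun v => (g (w ++ v)).drop (g w).length,
    fun u => (g⁻¹ (g w ++ u)).drop w.length, fun v => ?_, fun u => ?_⟩, hdrop⟩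
  · simp only
    rw [← hdrop v, Equiv.Perm.inv_apply_self, List.drop_left]
  · simp only
    rw [← hdrop' u, Equiv.Perm.apply_inv_self, List.drop_left]

lemma treeAut_apply_append (hg : g ∈ treeAut X) (w v : List X) :
    g (w ++ v) = g w ++ secAt g w v := by
  have hex := exists_section hg w
  rw [secAt, dif_pos hex]
  exact hex.choose_spec v

lemma secAt_eq_of_apply_append (hg : g ∈ treeAut X) (w : List X)
    {s : Equiv.Perm (List X)} (hs : ∀ v, g (w ++ v) = g w ++ s v) : secAt g w = s :=
  Equiv.ext fun v => List.append_cancel_left ((treeAut_apply_append hg w v).symm.trans (hs v))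

lemma secAt_one (w : List X) : secAt (1 : Equiv.Perm (List X)) w = 1 :=
  secAt_eq_of_apply_append (one_mem _) w fun v => by simp

lemma secAt_mul (hg : g ∈ treeAut X) (hh : h ∈ treeAut X) (w : List X) :
    secAt (g * h) w = secAt g (h w) * secAt h w :=
  secAt_eq_of_apply_append (mul_mem hg hh) w fun v => by
    simp only [Equiv.Perm.mul_apply]
    rw [treeAut_apply_append hh, treeAut_apply_append hg]

lemma secAt_mem_treeAut (hg : g ∈ treeAut X) (w : List X) : secAt g w ∈ treeAut X := by
  intro a b
  have hwab := hg (w ++ a) (w ++ b)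
  rw [treeAut_apply_append hg w a, treeAut_apply_append hg w b,
    List.prefix_append_right_inj, List.prefix_append_right_inj] at hwab
  exact hwab

lemma secAt_inv (hg : g ∈ treeAut X) (w : List X) : secAt g⁻¹ (g w) = (secAt g w)⁻¹ := by
  have h1 := secAt_mul (inv_mem hg) hg w
  rw [inv_mul_cancel, secAt_one] at h1
  exact eq_inv_of_mul_eq_one_left h1.symm

lemma secAt_nil (hg : g ∈ treeAut X) : secAt g [] = g :=
  secAt_eq_of_apply_append hg [] fun v => by rw [List.nil_append, treeAut_apply_nil hg,
    List.nil_append]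

lemma secAt_append (hg : g ∈ treeAut X) (w v : List X) :
    secAt g (w ++ v) = secAt (secAt g w) v :=
  secAt_eq_of_apply_append hg (w ++ v) fun u => by
    rw [List.append_assoc, treeAut_apply_append hg w (v ++ u),
      treeAut_apply_append (secAt_mem_treeAut hg w) v u, treeAut_apply_append hg w v,
      List.append_assoc]

lemma secAt_conj (hg : g ∈ treeAut X) (hh : h ∈ treeAut X) {v : List X} (hv : h v = v) :
    secAt (g * h * g⁻¹) (g v) = secAt g v * secAt h v * (secAt g v)⁻¹ := by
  rw [secAt_mul (mul_mem hg hh) (inv_mem hg), Equiv.Perm.inv_apply_self, secAt_inv hg,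
    secAt_mul hg hh, hv]

lemma apply_eq_self_of_apply_append (hg : g ∈ treeAut X) {w t : List X}
    (h : g (w ++ t) = w ++ t) : g w = w := by
  have hpre : g w <+: w ++ t := h ▸ (hg w (w ++ t)).mp (List.prefix_append w t)
  rw [List.prefix_iff_eq_take.mp hpre, length_apply_of_mem_treeAut hg w, List.take_left]

end TreeAut

section SectionSubgroup

variable {X : Type u}

def treeStab (X : Type u) (v : List X) : Subgroup (Equiv.Perm (List X)) where
  carrier := {g | g ∈ treeAut X ∧ g v = v}
  one_mem' := ⟨one_mem _, rfl⟩
  mul_mem' := by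
    rintro g h ⟨hg, hgv⟩ ⟨hh, hhv⟩
    exact ⟨mul_mem hg hh, by rw [Equiv.Perm.mul_apply, hhv, hgv]⟩
  inv_mem' := by
    rintro g ⟨hg, hgv⟩
    exact ⟨inv_mem hg, by rw [← hgv, Equiv.Perm.inv_apply_self, hgv]⟩

noncomputable def secHom (v : List X) : treeStab X v →* Equiv.Perm (List X) where
  toFun g := secAt (g : Equiv.Perm (List X)) v
  map_one' := secAt_one v
  map_mul' g h := by
    change secAt (g.1 * h.1) v = secAt g.1 v * secAt h.1 v
    rw [secAt_mul g.2.1 h.2.1, h.2.2]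

/-- `sec_K(v)`, as a subgroup. -/
noncomputable def secSub (K : Subgroup (Equiv.Perm (List X))) (v : List X) :
    Subgroup (Equiv.Perm (List X)) :=
  (K.subgroupOf (treeStab X v)).map (secHom v)

lemma mem_secSub {K : Subgroup (Equiv.Perm (List X))} (hK : K ≤ treeAut X) {v : List X}
    {m : Equiv.Perm (List X)} : m ∈ secSub K v ↔ ∃ g ∈ K, g v = v ∧ secAt g v = m := by
  constructor
  · rintro ⟨⟨g, _, hgv⟩, hgK, rfl⟩
    exact ⟨g, Subgroup.mem_subgroupOf.mp hgK, hgv, rfl⟩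
  · rintro ⟨g, hgK, hgv, rfl⟩
    exact ⟨⟨g, hK hgK, hgv⟩, Subgroup.mem_subgroupOf.mpr hgK, rfl⟩

lemma secImage_eq_secSub {K : Subgroup (Equiv.Perm (List X))} (hK : K ≤ treeAut X)
    (v : List X) : secImage K v = secSub K v := by
  ext m
  exact (mem_secSub hK).symm

lemma secSub_mono {K K' : Subgroup (Equiv.Perm (List X))} (h : K ≤ K') (v : List X) :
    secSub K v ≤ secSub K' v :=
  Subgroup.map_mono (Subgroup.comap_mono h)

end SectionSubgroup

section WeaklySelfReplicating

variable {X : Type u} {G M : Subgroup (Equiv.Perm (List X))}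

lemma secImage_append_of_secImage_eq (hM : M ≤ treeAut X) {w : List X}
    (hw : secImage M w = M) (v : List X) : secImage M (w ++ v) = secImage M v := by
  apply Set.Subset.antisymm
  · rintro _ ⟨g, hgM, hgwv, rfl⟩
    have hg := hM hgM
    have hgw : g w = w := apply_eq_self_of_apply_append hg hgwv
    have hsec : secAt g w ∈ secImage M w := ⟨g, hgM, hgw, rfl⟩
    rw [hw] at hsec
    refine ⟨secAt g w, hsec, ?_, (secAt_append hg w v).symm⟩
    rw [treeAut_apply_append hg, hgw] at hgwv
    exact List.append_cancel_left hgwv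
  · rintro _ ⟨k, hkM, hkv, rfl⟩
    obtain ⟨g, hgM, hgw, rfl⟩ : k ∈ secImage M w := hw ▸ hkM
    have hg := hM hgM
    exact ⟨g, hgM, by rw [treeAut_apply_append hg, hgw, hkv], secAt_append hg w v⟩

lemma secImage_nil (hM : M ≤ treeAut X) : secImage M [] = M := by
  ext g
  refine ⟨fun ⟨k, hkM, _, hkg⟩ => ?_, fun hg => ⟨g, hg, treeAut_apply_nil (hM hg), ?_⟩⟩
  · rwa [← hkg, secAt_nil (hM hkM)]
  · exact secAt_nil (hM hg)

lemma weaklySelfReplicating_of_secImage_singleton (hM : M ≤ treeAut X)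
    (h : ∀ x : X, secImage M [x] = M) : WeaklySelfReplicating M
  | [] => secImage_nil hM
  | x :: v => by
      rw [← List.singleton_append, secImage_append_of_secImage_eq hM (h x),
        weaklySelfReplicating_of_secImage_singleton hM h v]

lemma conj_secAt_mem_secImage_apply {g m : Equiv.Perm (List X)} (hM : M ≤ treeAut X)
    (hg : g ∈ treeAut X) (hgM : ∀ k ∈ M, g * k * g⁻¹ ∈ M) {v : List X}
    (hm : m ∈ secImage M v) : secAt g v * m * (secAt g v)⁻¹ ∈ secImage M (g v) := by
  obtain ⟨k, hkM, hkv, rfl⟩ := hm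
  refine ⟨g * k * g⁻¹, hgM k hkM, ?_, secAt_conj hg (hM hkM) hkv⟩
  simp only [Equiv.Perm.mul_apply, Equiv.Perm.inv_apply_self, hkv]

lemma normalIn_secSub (hss : SelfSimilarSub G) {v : List X} (hGv : G ≤ secSub G v)
    (hle : G ≤ treeAut X) (hM : NormalIn M G) : NormalIn (secSub M v) G := by
  have hMt : M ≤ treeAut X := hM.1.trans hle
  refine ⟨fun m hm => ?_, fun h hh m hm => ?_⟩
  · obtain ⟨k, hkM, -, rfl⟩ := (mem_secSub hMt).mp hm
    exact hss k (hM.1 hkM) v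
  · obtain ⟨g, hgG, hgv, rfl⟩ := (mem_secSub hle).mp (hGv hh)
    rw [← SetLike.mem_coe, ← secImage_eq_secSub hMt] at hm ⊢
    simpa only [hgv] using
      conj_secAt_mem_secImage_apply hMt (hle hgG) (hM.2 g hgG) hm

/-- Conjugation by an element of `G` carrying `x₀` to `x` transports `sec_M(x₀)` to
`sec_M(x)`. -/
lemma secImage_singleton_eq_of_normalIn (hle : G ≤ treeAut X) (hsr : SelfReplicating G)
    (hM : NormalIn M G) {x₀ : X} (h₀ : secImage M [x₀] = M) (x : X) :
    secImage M [x] = M := by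
  have hMt : M ≤ treeAut X := hM.1.trans hle
  obtain ⟨g, hgG, hgx⟩ := hsr.2.1 x₀ x
  have hg := hle hgG
  have hsecG : secAt g [x₀] ∈ G := hsr.1 g hgG [x₀]
  have hginv : g⁻¹ [x] = [x₀] := by rw [← hgx, Equiv.Perm.inv_apply_self]
  have hsecinv : secAt g⁻¹ [x] = (secAt g [x₀])⁻¹ := by rw [← hgx, secAt_inv hg]
  have hconj : ∀ k ∈ M, g⁻¹ * k * g⁻¹⁻¹ ∈ M := fun k hk => by
    simpa only [inv_inv] using hM.2 g⁻¹ (inv_mem hgG) k hk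
  set s := secAt g [x₀]
  apply Set.Subset.antisymm
  · intro m hm
    have h := conj_secAt_mem_secImage_apply hMt (inv_mem hg) hconj hm
    rw [hginv, hsecinv, h₀, inv_inv, SetLike.mem_coe] at h
    have h' := hM.2 s hsecG _ h
    rwa [show s * (s⁻¹ * m * s) * s⁻¹ = m by group] at h'
  · intro m hm
    have hm' : s⁻¹ * m * s ∈ secImage M [x₀] := by
      rw [h₀, SetLike.mem_coe]
      simpa only [inv_inv] using hM.2 _ (inv_mem hsecG) m hm
    have h := conj_secAt_mem_secImage_apply hMt hg (hM.2 g hgG) hm'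
    rwa [show s * (s⁻¹ * m * s) * s⁻¹ = m by group, hgx] at h

lemma weaklySelfReplicating_of_secSub_eq (hle : G ≤ treeAut X) (hsr : SelfReplicating G)
    (hM : NormalIn M G) {x : X} (hx : secSub M [x] = M) : WeaklySelfReplicating M := by
  have hMt : M ≤ treeAut X := hM.1.trans hle
  refine weaklySelfReplicating_of_secImage_singleton hMt
    (secImage_singleton_eq_of_normalIn hle hsr hM (x₀ := x) ?_)
  rw [secImage_eq_secSub hMt, hx]

lemma le_secSub_of_selfReplicating (hle : G ≤ treeAut X) (hsr : SelfReplicating G) (x : X) :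
    G ≤ secSub G [x] := fun g hg => by
  rwa [← SetLike.mem_coe, ← secImage_eq_secSub hle, hsr.2.2 x]

end WeaklySelfReplicating

section Verbal

variable {Q : Type*} [Group Q] {n : ℕ}

lemma MonoidHom.apply_freeGroupLift {α Q' : Type*} [Group Q'] (ψ : Q →* Q') (f : α → Q)
    (δ : FreeGroup α) : ψ (FreeGroup.lift f δ) = FreeGroup.lift (ψ ∘ f) δ :=
  FreeGroup.lift_unique (ψ.comp (FreeGroup.lift f)) (by simp)

lemma FreeGroup.lift_apply_mem {α : Type*} {K : Subgroup Q} {f : α → Q} (hf : ∀ i, f i ∈ K)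
    (δ : FreeGroup α) : FreeGroup.lift f δ ∈ K :=
  FreeGroup.range_lift_le (Set.range_subset_iff.mpr hf) ⟨δ, rfl⟩

lemma lift_mem_verbalIn {H : Subgroup Q} {f : Fin n → Q} (hf : ∀ i, f i ∈ H)
    (δ : FreeGroup (Fin n)) : FreeGroup.lift f δ ∈ verbalIn δ H :=
  Subgroup.subset_closure ⟨f, hf, rfl⟩

lemma verbalIn_le (δ : FreeGroup (Fin n)) (H : Subgroup Q) : verbalIn δ H ≤ H := by
  rw [verbalIn, Subgroup.closure_le]
  rintro _ ⟨f, hf, rfl⟩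
  exact FreeGroup.lift_apply_mem hf δ

lemma verbalIn_mono (δ : FreeGroup (Fin n)) {H H' : Subgroup Q} (h : H ≤ H') :
    verbalIn δ H ≤ verbalIn δ H' :=
  Subgroup.closure_mono fun _ ⟨f, hf, hfg⟩ => ⟨f, fun i => h (hf i), hfg⟩

lemma normalIn_self (G : Subgroup Q) : NormalIn G G :=
  ⟨le_rfl, fun _ hh _ hm => mul_mem (mul_mem hh hm) (inv_mem hh)⟩

lemma normalIn_verbalIn {G H : Subgroup Q} (hH : NormalIn H G) (δ : FreeGroup (Fin n)) :
    NormalIn (verbalIn δ H) G := by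
  refine ⟨(verbalIn_le δ H).trans hH.1, fun h hh m hm => ?_⟩
  suffices verbalIn δ H ≤ (verbalIn δ H).comap (MulAut.conj h).toMonoidHom from this hm
  rw [verbalIn, Subgroup.closure_le]
  rintro _ ⟨f, hf, rfl⟩
  simp only [Subgroup.coe_comap, Set.mem_preimage, MonoidHom.apply_freeGroupLift]
  exact lift_mem_verbalIn (fun i => hH.2 h hh (f i) (hf i)) δ

/-- Values of a word at sections are sections of the values at the chosen lifts. -/
lemma verbalIn_secSub_le {X : Type u} (δ : FreeGroup (Fin n))
    (H : Subgroup (Equiv.Perm (List X))) (v : List X) :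
    verbalIn δ (secSub H v) ≤ secSub (verbalIn δ H) v := by
  rw [verbalIn, Subgroup.closure_le]
  rintro _ ⟨f, hf, rfl⟩
  choose F hFH hF using hf
  refine ⟨FreeGroup.lift F δ, ?_, by rw [MonoidHom.apply_freeGroupLift]; congr; exact funext hF⟩
  rw [SetLike.mem_coe, Subgroup.mem_subgroupOf,
    ← Subgroup.coe_subtype, MonoidHom.apply_freeGroupLift]
  exact lift_mem_verbalIn (fun i => Subgroup.mem_subgroupOf.mp (hFH i)) δ

lemma verbalIn_le_secSub {X : Type u} (δ : FreeGroup (Fin n))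
    {H : Subgroup (Equiv.Perm (List X))} {v : List X} (hH : H ≤ secSub H v) :
    verbalIn δ H ≤ secSub (verbalIn δ H) v :=
  (verbalIn_mono δ hH).trans (verbalIn_secSub_le δ H v)

end Verbal

section ConstructionRank

lemma finite_or_comm_of_surjective {A B : Type*} [Group A] [Group B] (f : A →* B)
    (hf : Function.Surjective f) (h : Finite A ∨ ∀ a b : A, a * b = b * a) :
    Finite B ∨ ∀ a b : B, a * b = b * a := by
  refine h.imp (fun hA => @Finite.of_surjective _ _ hA f hf) fun hcomm a b => ?_
  obtain ⟨a, rfl⟩ := hf a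
  obtain ⟨b, rfl⟩ := hf b
  rw [← map_mul, ← map_mul, hcomm]

lemma finite_or_comm_of_injective {A B : Type*} [Group A] [Group B] (f : A →* B)
    (hf : Function.Injective f) (h : Finite B ∨ ∀ a b : B, a * b = b * a) :
    Finite A ∨ ∀ a b : A, a * b = b * a :=
  h.imp (fun hB => @Finite.of_injective _ _ hB f hf) fun hcomm a b =>
    hf (by rw [map_mul, map_mul, hcomm])

lemma iSup_comap_eq_top_of_injective {A B : Type*} [Group A] [Group B] {f : A →* B}
    (hf : Function.Injective f) {ι : Type*} {K : ι → Subgroup B} (hK : Directed (· ≤ ·) K)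
    (hsup : ⨆ i, K i = ⊤) : ⨆ i, (K i).comap f = ⊤ := by
  rcases isEmpty_or_nonempty ι with hι | hι
  · rw [iSup_of_empty] at hsup ⊢
    refine eq_top_iff.mpr fun a _ => hf ?_
    rw [map_one, ← Subgroup.mem_bot, hsup]
    exact Subgroup.mem_top _
  · refine eq_top_iff.mpr fun a _ => ?_
    have hfa : f a ∈ ⨆ i, K i := hsup ▸ Subgroup.mem_top (f a)
    obtain ⟨i, hi⟩ := (Subgroup.mem_iSup_of_directed hK).mp hfa
    have hKf : Directed (· ≤ ·) fun i => (K i).comap f := fun i j =>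
      (hK i j).imp fun _ hk => ⟨Subgroup.comap_mono hk.1, Subgroup.comap_mono hk.2⟩
    exact (Subgroup.mem_iSup_of_directed hKf).mpr ⟨i, hi⟩

lemma Function.Injective.subgroupComap {A B : Type*} [Group A] [Group B] {f : A →* B}
    (hf : Function.Injective f) (H : Subgroup B) : Function.Injective (f.subgroupComap H) :=
  fun _ _ hab => Subtype.ext (hf (congrArg Subtype.val hab))

theorem InEG.of_surjective {α : Ordinal.{u}} {A : Type u} [Group A] (h : InEG α A) :
    ∀ {B : Type u} [Group B] (f : A →* B), Function.Surjective f → InEG α B := by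
  induction h with
  | base A hA =>
      exact fun f hf => InEG.base _ (finite_or_comm_of_surjective f hf hA)
  | iso α A A' e _ ih =>
      exact fun f hf => ih (f.comp e.toMonoidHom) (hf.comp e.surjective)
  | succ_ext α A N _ hQ ih =>
      intro B _ f hf
      have hNf : InEG α (N.map f) := ih (f.subgroupMap N) (f.subgroupMap_surjective N)
      have : (N.map f).Normal := Subgroup.Normal.map inferInstance f hf
      refine InEG.succ_ext α B (N.map f) hNf (finite_or_comm_of_surjective
        (QuotientGroup.map N (N.map f) f (Subgroup.le_comap_map f N)) ?_ hQ)
      exact QuotientGroup.map_surjective_of_surjective _ _ f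
        (QuotientGroup.mk_surjective.comp hf) _
  | succ_lim α A ι K hK hsup _ ih =>
      intro B _ f hf
      refine InEG.succ_lim α B ι (fun i => (K i).map f)
        (fun i j => (hK i j).imp fun _ hk => ⟨Subgroup.map_mono hk.1, Subgroup.map_mono hk.2⟩) ?_
        fun i => ih i (f.subgroupMap _) (f.subgroupMap_surjective _)
      rw [← Subgroup.map_iSup, hsup, Subgroup.map_top_of_surjective f hf]
  | limit α β A hα hβ _ ih =>
      exact fun f hf => InEG.limit α β _ hα hβ (ih f hf)

theorem InEG.of_injective {α : Ordinal.{u}} {B : Type u} [Group B] (h : InEG α B) :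
    ∀ {A : Type u} [Group A] (f : A →* B), Function.Injective f → InEG α A := by
  induction h with
  | base B hB =>
      exact fun f hf => InEG.base _ (finite_or_comm_of_injective f hf hB)
  | iso α B' B e _ ih =>
      exact fun f hf => ih (e.symm.toMonoidHom.comp f) (e.symm.injective.comp hf)
  | succ_ext α B N _ hQ ih =>
      intro A _ f hf
      have hNf : InEG α (N.comap f) := ih (f.subgroupComap N) (hf.subgroupComap N)
      have : (N.comap f).Normal := Subgroup.Normal.comap inferInstance f
      refine InEG.succ_ext α A (N.comap f) hNf (finite_or_comm_of_injective
        (QuotientGroup.map (N.comap f) N f le_rfl) ?_ hQ)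
      rw [← MonoidHom.ker_eq_bot_iff, QuotientGroup.ker_map, QuotientGroup.map_mk'_self]
  | succ_lim α B ι K hK hsup _ ih =>
      intro A _ f hf
      exact InEG.succ_lim α A ι (fun i => (K i).comap f)
        (fun i j => (hK i j).imp fun _ hk => ⟨Subgroup.comap_mono hk.1, Subgroup.comap_mono hk.2⟩)
        (iSup_comap_eq_top_of_injective hf hK hsup)
        fun i => ih i (f.subgroupComap _) (hf.subgroupComap _)
  | limit α β B hα hβ _ ih =>
      exact fun f hf => InEG.limit α β _ hα hβ (ih f hf)

variable {Q : Type u} [Group Q] {α : Ordinal.{u}}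

lemma InEG.of_le {K L : Subgroup Q} (hKL : K ≤ L) (h : InEG α L) : InEG α K :=
  h.of_injective (Subgroup.inclusion hKL) (Subgroup.inclusion_injective hKL)

lemma egRank_eq_of_le {K L : Subgroup Q} (hKL : K ≤ L) (h : ∀ α, InEG α K → InEG α L) :
    egRank L = egRank K := by
  rw [egRank, egRank]
  congr 1
  ext α
  exact ⟨fun hL => hL.of_le hKL, h α⟩

lemma InEG.secSub {X : Type u} {K : Subgroup (Equiv.Perm (List X))} (h : InEG α K)
    (v : List X) : InEG α (secSub K v) :=
  (h.of_injective ((treeStab X v).subtype.subgroupComap K)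
    ((treeStab X v).subtype_injective.subgroupComap K)).of_surjective
    ((secHom v).subgroupMap _) ((secHom v).subgroupMap_surjective _)

end ConstructionRank

section SectionChain

variable {X : Type u}

noncomputable def secChain (K : Subgroup (Equiv.Perm (List X))) (v : List X) (n : ℕ) :
    Subgroup (Equiv.Perm (List X)) :=
  (fun H => secSub H v)^[n] K

variable {K : Subgroup (Equiv.Perm (List X))} {v : List X}

lemma secChain_succ (K : Subgroup (Equiv.Perm (List X))) (v : List X) (n : ℕ) :
    secChain K v (n + 1) = secSub (secChain K v n) v :=
  Function.iterate_succ_apply' _ n K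

lemma secChain_mono_left {K' : Subgroup (Equiv.Perm (List X))} (h : K ≤ K') (n : ℕ) :
    secChain K v n ≤ secChain K' v n :=
  Monotone.iterate (fun _ _ hH => secSub_mono hH v) n h

lemma monotone_secChain (hK : K ≤ secSub K v) : Monotone (secChain K v) :=
  monotone_nat_of_le_succ fun n => by
    rw [secChain, secChain, Function.iterate_succ_apply]
    exact secChain_mono_left hK n

lemma le_secChain (hK : K ≤ secSub K v) (n : ℕ) : K ≤ secChain K v n :=
  monotone_secChain hK (Nat.zero_le n)

lemma normalIn_secChain {G : Subgroup (Equiv.Perm (List X))} (hss : SelfSimilarSub G)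
    (hGv : G ≤ secSub G v) (hle : G ≤ treeAut X) (hK : NormalIn K G) :
    ∀ n, NormalIn (secChain K v n) G
  | 0 => hK
  | n + 1 => by
      rw [secChain_succ]
      exact normalIn_secSub hss hGv hle (normalIn_secChain hss hGv hle hK n)

lemma verbalIn_secChain_le {n : ℕ} (δ : FreeGroup (Fin n)) (K : Subgroup (Equiv.Perm (List X)))
    (v : List X) : ∀ m, verbalIn δ (secChain K v m) ≤ secChain (verbalIn δ K) v m
  | 0 => le_rfl
  | m + 1 => by
      rw [secChain_succ, secChain_succ]
      exact (verbalIn_secSub_le δ _ v).trans (secSub_mono (verbalIn_secChain_le δ K v m) v)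

lemma InEG.secChain {α : Ordinal.{u}} (h : InEG α K) (v : List X) :
    ∀ n, InEG α (secChain K v n)
  | 0 => h
  | n + 1 => by
      rw [secChain_succ]
      exact (h.secChain v n).secSub v

lemma egRank_secChain (hK : K ≤ secSub K v) (n : ℕ) : egRank (secChain K v n) = egRank K :=
  egRank_eq_of_le (le_secChain hK n) fun _ h => h.secChain v n

lemma weaklySelfReplicating_secChain {G : Subgroup (Equiv.Perm (List X))}
    (hle : G ≤ treeAut X) (hsr : SelfReplicating G) {x : X} (hK : NormalIn K G)
    {n₀ n : ℕ} (hstable : ∀ m, n₀ ≤ m → secChain K [x] m = secChain K [x] n₀) (hn : n₀ ≤ n) :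
    WeaklySelfReplicating (secChain K [x] n) := by
  refine weaklySelfReplicating_of_secSub_eq hle hsr
    (normalIn_secChain hsr.1 (le_secSub_of_selfReplicating hle hsr x) hle hK n) (x := x) ?_
  rw [← secChain_succ, hstable _ (hn.trans n.le_succ), hstable n hn]

end SectionChain

theorem verbal_weaklySelfReplicating_general
    {X : Type u} [Nontrivial X]
    (G : Subgroup (Equiv.Perm (List X))) (hle : G ≤ treeAut X)
    (hsr : SelfReplicating G)
    {nγ nβ : ℕ} (γ : FreeGroup (Fin nγ)) (β : FreeGroup (Fin nβ))
    (hmax : ∀ C : ℕ →o Subgroup (Equiv.Perm (List X)),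
      (∀ n, NormalIn (C n) G) → (∀ n, verbalIn β (verbalIn γ G) ≤ C n) →
      ∃ n, ∀ m, n ≤ m → C m = C n) :
    ∃ M N : Subgroup (Equiv.Perm (List X)),
      WeaklySelfReplicating M ∧ WeaklySelfReplicating N ∧
      NormalIn M G ∧ NormalIn N G ∧
      N ≤ M ∧ verbalIn γ G ≤ M ∧ verbalIn β (verbalIn γ G) ≤ N ∧
      egRank ↥M = egRank ↥(verbalIn γ G) ∧
      egRank ↥N = egRank ↥(verbalIn β (verbalIn γ G)) ∧
      ∀ f : Fin nβ → Equiv.Perm (List X), (∀ i, f i ∈ M) → FreeGroup.lift f β ∈ N := by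
  obtain ⟨x⟩ : Nonempty X := inferInstance
  set K := verbalIn γ G
  set L := verbalIn β K
  have hGx : G ≤ secSub G [x] := le_secSub_of_selfReplicating hle hsr x
  have hKx : K ≤ secSub K [x] := verbalIn_le_secSub γ hGx
  have hLx : L ≤ secSub L [x] := verbalIn_le_secSub β hKx
  have hKG : NormalIn K G := normalIn_verbalIn (normalIn_self G) γ
  have hLG : NormalIn L G := normalIn_verbalIn hKG β
  have hKn := normalIn_secChain hsr.1 hGx hle hKG
  have hLn := normalIn_secChain hsr.1 hGx hle hLG
  obtain ⟨n₁, hn₁⟩ := hmax ⟨secChain K [x], monotone_secChain hKx⟩ hKn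
    fun n => (verbalIn_le β K).trans (le_secChain hKx n)
  obtain ⟨n₂, hn₂⟩ := hmax ⟨secChain L [x], monotone_secChain hLx⟩ hLn (le_secChain hLx)
  set n := max n₁ n₂
  refine ⟨secChain K [x] n, secChain L [x] n,
    weaklySelfReplicating_secChain hle hsr hKG hn₁ (le_max_left n₁ n₂),
    weaklySelfReplicating_secChain hle hsr hLG hn₂ (le_max_right n₁ n₂),
    hKn n, hLn n, secChain_mono_left (verbalIn_le β K) n, le_secChain hKx n, le_secChain hLx n,
    egRank_secChain hKx n, egRank_secChain hLx n, fun f hf => ?_⟩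
  exact verbalIn_secChain_le β K [x] n (lift_mem_verbalIn hf β)

/-- **Verbal subgroups of elementary amenable self-replicating groups**: if
`G ≤ Aut(X*)` is elementary amenable and self-replicating and `γ, β` are words such that
`G/β(γ(G))` is a max-n group (all increasing chains of normal subgroups of `G` containing
`β(γ(G))` stabilize), then there are weakly self-replicating normal subgroups `M, N` of
`G` with `N ≤ M`, `γ(G) ≤ M`, `β(γ(G)) ≤ N`, `rk(M) = rk(γ(G))`,
`rk(N) = rk(β(γ(G)))` and `β(M/N) = 1`. -/
theorem verbal_weaklySelfReplicating
    {X : Type u} [Finite X] [Nontrivial X]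
    (G : Subgroup (Equiv.Perm (List X))) (hle : G ≤ treeAut X)
    (hEA : ElementaryAmenable ↥G) (hsr : SelfReplicating G)
    {nγ nβ : ℕ} (γ : FreeGroup (Fin nγ)) (β : FreeGroup (Fin nβ))
    (hmax : ∀ C : ℕ →o Subgroup (Equiv.Perm (List X)),
      (∀ n, NormalIn (C n) G) → (∀ n, verbalIn β (verbalIn γ G) ≤ C n) →
      ∃ n, ∀ m, n ≤ m → C m = C n) :
    ∃ M N : Subgroup (Equiv.Perm (List X)),
      WeaklySelfReplicating M ∧ WeaklySelfReplicating N ∧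
      NormalIn M G ∧ NormalIn N G ∧
      N ≤ M ∧ verbalIn γ G ≤ M ∧ verbalIn β (verbalIn γ G) ≤ N ∧
      egRank ↥M = egRank ↥(verbalIn γ G) ∧
      egRank ↥N = egRank ↥(verbalIn β (verbalIn γ G)) ∧
      ∀ f : Fin nβ → Equiv.Perm (List X), (∀ i, f i ∈ M) → FreeGroup.lift f β ∈ N :=
  verbal_weaklySelfReplicating_general G hle hsr γ β hmax
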